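/- For every ℰ with −1 < ℰ < 1, the librational averaged integral evaluates in closed form in terms of complete elliptic integrals: (√2/π) ∫_{φ=−arccos(−ℰ)}^{arccos(−ℰ)} √(cos φ + ℰ) dφ = (8/π)·E((1+ℰ)/2) − (4/π)·(1−ℰ)·K((1+ℰ)/2). -/

import Mathlib

open MeasureTheory Real

/-- The complete elliptic integral of the first kind,
`K(m) = ∫₀¹ ds/(√(1−s²)·√(1−m s²))`. -/
noncomputable def ellipticK (m : ℝ) : ℝ :=
  ∫ s in (0 : ℝ)..1, 1 / (Real.sqrt (1 - s ^ 2) * Real.sqrt (1 - m * s ^ 2))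

/-- The complete elliptic integral of the second kind,
`E(m) = ∫₀¹ √(1−m s²)/√(1−s²) ds`. -/
noncomputable def ellipticE (m : ℝ) : ℝ :=
  ∫ s in (0 : ℝ)..1, Real.sqrt (1 - m * s ^ 2) / Real.sqrt (1 - s ^ 2)

/-!
With `m = (1 + ℰ) / 2` the substitution `φ = 2 arcsin (√m s)`, `s ∈ [-1, 1]`, turns `cos φ + ℰ`
into `2m (1 - s²)` and `dφ` into `2√m ds / √(1 - m s²)`, so the left-hand integral equals
`4√2 m ∫₀¹ √(1 - s²) / √(1 - m s²) ds`. Integrating the identity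
`1 - m s² = m (1 - s²) + (1 - m)` against `1 / (√(1 - s²) √(1 - m s²))` identifies this last
integral with `(E(m) - (1 - m) K(m)) / m`.
-/

open Set intervalIntegral

theorem integral_neg_to_self_eq_two_nsmul_of_even {E : Type*} [NormedAddCommGroup E]
    [NormedSpace ℝ E] {f : ℝ → E} {a : ℝ} (hf : ∀ x, f (-x) = f x)
    (hfi : IntervalIntegrable f volume 0 a) :
    ∫ x in -a..a, f x = 2 • ∫ x in 0..a, f x := by
  have hneg : ∫ x in -a..0, f x = ∫ x in 0..a, f x := by
    simpa [hf] using (integral_comp_neg (a := 0) (b := a) f).symm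
  have hfi' : IntervalIntegrable f volume (-a) 0 := by
    simpa [hf] using ((IntervalIntegrable.iff_comp_neg enorm_ne_top).1 hfi).symm
  rw [← integral_add_adjacent_intervals hfi' hfi, hneg, two_nsmul]

lemma one_sub_mul_sq_pos {m s : ℝ} (hm : m < 1) (hs : |s| ≤ 1) : 0 < 1 - m * s ^ 2 := by
  have hs2 : s ^ 2 ≤ 1 := sq_le_one_iff_abs_le_one s |>.2 hs
  rcases le_total m 0 with hm0 | hm0
  · nlinarith [sq_nonneg s]
  · nlinarith

lemma continuousOn_sqrt_one_sub_sq_div_sqrt {m : ℝ} (hm : m < 1) :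
    ContinuousOn (fun s => √(1 - s ^ 2) / √(1 - m * s ^ 2)) (Icc (-1) 1) :=
  (by fun_prop : Continuous fun s : ℝ => √(1 - s ^ 2)).continuousOn.div (by fun_prop)
    fun _ hs => (sqrt_pos.2 (one_sub_mul_sq_pos hm (abs_le.2 hs))).ne'

lemma intervalIntegrable_ellipticK_integrand {m : ℝ} (hm : m < 1) :
    IntervalIntegrable (fun s => 1 / (√(1 - s ^ 2) * √(1 - m * s ^ 2))) volume 0 1 := by
  have hinv : IntervalIntegrable (fun s : ℝ => (√(1 - s ^ 2))⁻¹) volume 0 1 := by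
    simpa only [sqrt_inv] using
      Polynomial.Chebyshev.intervalIntegrable_sqrt_one_sub_sq_inv.mono_set
        (by simp [uIcc_of_le, Icc_subset_Icc] : uIcc (0 : ℝ) 1 ⊆ uIcc (-1) 1)
  have hcont : ContinuousOn (fun s : ℝ => (√(1 - m * s ^ 2))⁻¹) (Icc 0 1) :=
    (by fun_prop : Continuous fun s : ℝ => √(1 - m * s ^ 2)).continuousOn.inv₀
      fun s hs => (sqrt_pos.2 (one_sub_mul_sq_pos hm (abs_le.2 ⟨by linarith [hs.1], hs.2⟩))).ne'
  simpa only [one_div, mul_inv] using hinv.mul_continuousOn (by rwa [uIcc_of_le zero_le_one])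

-- Both sides vanish, by `x / 0 = 0`, wherever one of the square roots does.
lemma sqrt_div_sqrt_eq_mul_add_mul (m s : ℝ) :
    √(1 - m * s ^ 2) / √(1 - s ^ 2)
      = m * (√(1 - s ^ 2) / √(1 - m * s ^ 2))
        + (1 - m) * (1 / (√(1 - s ^ 2) * √(1 - m * s ^ 2))) := by
  rcases (sqrt_nonneg (1 - s ^ 2)).eq_or_lt with hA | hA
  · simp [← hA]
  rcases (sqrt_nonneg (1 - m * s ^ 2)).eq_or_lt with hB | hB
  · simp [← hB]
  have hA2 := sq_sqrt (sqrt_pos.1 hA).le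
  have hB2 := sq_sqrt (sqrt_pos.1 hB).le
  field_simp
  linear_combination hB2 - m * hA2

theorem ellipticE_sub_mul_ellipticK {m : ℝ} (hm : m < 1) :
    ellipticE m - (1 - m) * ellipticK m
      = m * ∫ s in (0 : ℝ)..1, √(1 - s ^ 2) / √(1 - m * s ^ 2) := by
  have hint : IntervalIntegrable (fun s => √(1 - s ^ 2) / √(1 - m * s ^ 2)) volume 0 1 :=
    ((continuousOn_sqrt_one_sub_sq_div_sqrt hm).mono (Icc_subset_Icc (by norm_num) le_rfl)
      |>.intervalIntegrable_of_Icc zero_le_one)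
  rw [ellipticE, ellipticK]
  simp_rw [sqrt_div_sqrt_eq_mul_add_mul m]
  rw [integral_add (hint.const_mul m) ((intervalIntegrable_ellipticK_integrand hm).const_mul _),
    intervalIntegral.integral_const_mul, intervalIntegral.integral_const_mul]
  ring

lemma cos_two_mul_arcsin {x : ℝ} (hx₁ : -1 ≤ x) (hx₂ : x ≤ 1) :
    cos (2 * arcsin x) = 1 - 2 * x ^ 2 := by
  rw [cos_two_mul_eq_one_sub, sin_arcsin hx₁ hx₂]

lemma arccos_one_sub_two_mul_sq {x : ℝ} (hx₀ : 0 ≤ x) (hx₁ : x ≤ 1) :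
    arccos (1 - 2 * x ^ 2) = 2 * arcsin x := by
  rw [← cos_two_mul_arcsin (by linarith) hx₁,
    arccos_cos (by positivity [arcsin_nonneg.2 hx₀]) (by linarith [arcsin_le_pi_div_two x])]

theorem integral_comp_two_mul_arcsin {k : ℝ} (hk : |k| < 1) {g : ℝ → ℝ} (hg : Continuous g) :
    ∫ φ in -(2 * arcsin k)..2 * arcsin k, g φ
      = ∫ s in (-1 : ℝ)..1, g (2 * arcsin (k * s)) * (2 * k / √(1 - (k * s) ^ 2)) := by
  have hks {s : ℝ} (hs : s ∈ uIcc (-1) 1) : (k * s) ^ 2 < 1 := by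
    rw [uIcc_of_le (by norm_num)] at hs
    rw [mul_pow]
    have hs2 := (sq_le_one_iff_abs_le_one s).2 (abs_le.2 hs)
    have hk2 := (sq_lt_one_iff_abs_lt_one k).2 hk
    nlinarith [sq_nonneg k]
  have hderiv (s : ℝ) (hs : s ∈ uIcc (-1) 1) :
      HasDerivAt (fun s => 2 * arcsin (k * s)) (2 * k / √(1 - (k * s) ^ 2)) s := by
    obtain ⟨h₁, h₂⟩ := abs_lt.1 ((sq_lt_one_iff_abs_lt_one _).1 (hks hs))
    refine (((hasDerivAt_arcsin h₁.ne' h₂.ne).comp s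
      ((hasDerivAt_id s).const_mul k)).const_mul (2 : ℝ)).congr_deriv ?_
    ring
  have hcont : ContinuousOn (fun s => 2 * k / √(1 - (k * s) ^ 2)) (uIcc (-1) 1) :=
    continuousOn_const.div (by fun_prop) fun s hs => (sqrt_pos.2 (by linarith [hks hs])).ne'
  simpa [arcsin_neg] using (integral_comp_mul_deriv hderiv hcont hg).symm

theorem integral_sqrt_cos_add_two_mul_sub_one {m : ℝ} (hm₀ : 0 ≤ m) (hm₁ : m < 1) :
    ∫ φ in -arccos (1 - 2 * m)..arccos (1 - 2 * m), √(cos φ + (2 * m - 1))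
      = 4 * √2 * m * ∫ s in (0 : ℝ)..1, √(1 - s ^ 2) / √(1 - m * s ^ 2) := by
  set k := √m
  have hk2 : k ^ 2 = m := sq_sqrt hm₀
  have hk₀ : 0 ≤ k := sqrt_nonneg m
  have hk₁ : k < 1 := (sqrt_lt' one_pos).2 (by rwa [one_pow])
  have harccos : arccos (1 - 2 * m) = 2 * arcsin k := by
    rw [← hk2]; exact arccos_one_sub_two_mul_sq hk₀ hk₁.le
  have hintegrand : ∀ s ∈ uIcc (-1 : ℝ) 1,
      √(cos (2 * arcsin (k * s)) + (2 * m - 1)) * (2 * k / √(1 - (k * s) ^ 2))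
        = 2 * √2 * m * (√(1 - s ^ 2) / √(1 - m * s ^ 2)) := by
    intro s hs
    rw [uIcc_of_le (by norm_num)] at hs
    have hks : |k * s| ≤ 1 := by
      rw [abs_mul, abs_of_nonneg hk₀]
      nlinarith [abs_le.2 hs, abs_nonneg s]
    rw [cos_two_mul_arcsin (abs_le.1 hks).1 (abs_le.1 hks).2, mul_pow, hk2,
      show 1 - 2 * (m * s ^ 2) + (2 * m - 1) = 2 * m * (1 - s ^ 2) by ring,
      sqrt_mul (by positivity), sqrt_mul zero_le_two, ← hk2, sqrt_sq hk₀]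
    ring
  have heven (s : ℝ) :
      √(1 - (-s) ^ 2) / √(1 - m * (-s) ^ 2) = √(1 - s ^ 2) / √(1 - m * s ^ 2) := by
    rw [neg_sq]
  rw [harccos, integral_comp_two_mul_arcsin (by rwa [abs_of_nonneg hk₀]) (by fun_prop),
    integral_congr hintegrand, intervalIntegral.integral_const_mul,
    integral_neg_to_self_eq_two_nsmul_of_even heven
      ((continuousOn_sqrt_one_sub_sq_div_sqrt hm₁).mono (Icc_subset_Icc (by norm_num) le_rfl)
        |>.intervalIntegrable_of_Icc zero_le_one)]
  ring

/-- **Closed form of the librational averaged integral.** For `−1 < ℰ < 1`,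
`(√2/π) ∫_{−arccos(−ℰ)}^{arccos(−ℰ)} √(cos φ + ℰ) dφ
  = (8/π) E((1+ℰ)/2) − (4/π)(1−ℰ) K((1+ℰ)/2)`. -/
theorem librational_average_closed_form (E : ℝ) (hE₁ : -1 < E) (hE₂ : E < 1) :
    (Real.sqrt 2 / Real.pi) *
        ∫ φ in (-(Real.arccos (-E)))..(Real.arccos (-E)), Real.sqrt (Real.cos φ + E)
      = (8 / Real.pi) * ellipticE ((1 + E) / 2)
          - (4 / Real.pi) * (1 - E) * ellipticK ((1 + E) / 2) := by
  obtain ⟨m, rfl⟩ : ∃ m, E = 2 * m - 1 := ⟨(1 + E) / 2, by ring⟩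
  rw [show (1 + (2 * m - 1)) / 2 = m by ring, neg_sub,
    integral_sqrt_cos_add_two_mul_sub_one (by linarith) (by linarith),
    show 4 / π * (1 - (2 * m - 1)) * ellipticK m = 8 / π * ((1 - m) * ellipticK m) by ring,
    ← mul_sub, ellipticE_sub_mul_ellipticK (by linarith)]
  linear_combination (4 * m * (∫ s in (0 : ℝ)..1, √(1 - s ^ 2) / √(1 - m * s ^ 2)) / π)
    * mul_self_sqrt zero_le_two
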